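/- arXiv:1706.05175 — 6 statements merged into one kernel-verified Lean document; each statement's English description precedes it below -/
import Mathlib

section
/- Let m, n ≥ 1, let u₁,...,uₙ : ℝᵐ → ℂ be continuously differentiable, and set F(p,y) = p^{n+1}/(n+1) + u₁(y)p^{n−1} + u₂(y)p^{n−2} + ⋯ + uₙ(y) for p ∈ ℂ, y ∈ ℝᵐ. Suppose λ : ℝᵐ → ℂ is a continuous function such that ∂_p F(λ(y), y) = 0 for every y (a continuously chosen critical point). Then the critical value r(y) := F(λ(y), y) is a C¹ function of y, and its partial derivatives are given by ∂_{y_j} r(y) = Σ_{i=1}^{n} ∂_{y_j} u_i(y) · λ(y)^{n−i} for every y and every j = 1,...,m. -/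
/-!
Write `G = F(·, y₀)` and `λ₀ = λ(y₀)`. Then `r(y) - r(y₀)` is the sum of
`F(λ(y), y) - F(λ(y), y₀) = Σᵢ (uᵢ(y) - uᵢ(y₀)) λ(y)^{n-i}`, which has the claimed derivative,
and `G(λ(y)) - G(λ₀)`, which is `o(|y - y₀|)`: if `G'` vanishes to order `k` at `λ₀`, then
`G - G(λ₀)` vanishes to order `k + 1`, so `G(z) - G(λ₀) = O((z - λ₀) G'(z))`; and
`G'(λ(y)) = G'(λ(y)) - ∂ₚF(λ(y), y) = O(|y - y₀|)` while `λ(y) → λ₀`.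
The derivative `Σᵢ λ^{n-i} duᵢ` is continuous, so `r` is `C¹`.
-/

open Polynomial Asymptotics Filter Topology

theorem Asymptotics.isBigO_of_tendsto_ne_zero {α 𝕜 : Type*} [NormedField 𝕜] {l : Filter α}
    {f g : α → 𝕜} {a b : 𝕜} (hf : Tendsto f l (𝓝 a)) (hg : Tendsto g l (𝓝 b)) (hb : b ≠ 0) :
    f =O[l] g :=
  (hf.isBigO_one 𝕜).trans <| (isBigO_const_left_iff_pos_le_norm one_ne_zero).2
    ⟨‖b‖ / 2, by positivity, hg.norm.eventually_const_le (by simpa using norm_pos_iff.2 hb)⟩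

theorem Polynomial.eval_sub_eval_isBigO_mul_derivative {𝕜 : Type*} [NormedField 𝕜] [CharZero 𝕜]
    (G : 𝕜[X]) (z₀ : 𝕜) :
    (fun z => G.eval z - G.eval z₀) =O[𝓝 z₀] fun z => (z - z₀) * G.derivative.eval z := by
  set H := G - C (G.eval z₀) with hH_def
  have hHeval : ∀ z, H.eval z = G.eval z - G.eval z₀ := fun z => by simp [H]
  rcases eq_or_ne H 0 with hH | hH
  · simp [← hHeval, hH, isBigO_zero]
  have hroot : H.IsRoot z₀ := by simp [IsRoot, hHeval]
  have hHD : H.derivative = G.derivative := by simp [H]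
  have hD : G.derivative ≠ 0 := by
    intro hD
    apply hH
    rw [hH_def, eq_C_of_derivative_eq_zero hD]
    simp
  obtain ⟨S, hS, hSz₀⟩ := exists_eq_pow_rootMultiplicity_mul_and_not_dvd _ hD z₀
  set k := G.derivative.rootMultiplicity z₀
  have hk : H.rootMultiplicity z₀ = k + 1 := by
    have := (rootMultiplicity_pos hH).2 hroot
    have := derivative_rootMultiplicity_of_root hroot
    rw [hHD] at this
    omega
  obtain ⟨T, hT⟩ : (X - C z₀) ^ (k + 1) ∣ H := hk ▸ pow_rootMultiplicity_dvd H z₀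
  have hTS : (fun z => T.eval z) =O[𝓝 z₀] fun z => S.eval z :=
    isBigO_of_tendsto_ne_zero (T.continuous.tendsto z₀) (S.continuous.tendsto z₀)
      fun h => hSz₀ (dvd_iff_isRoot.2 h)
  calc (fun z => G.eval z - G.eval z₀)
      = fun z => (z - z₀) ^ (k + 1) * T.eval z := by
        ext z; rw [← hHeval, hT]; simp
    _ =O[𝓝 z₀] fun z => (z - z₀) ^ (k + 1) * S.eval z := (isBigO_refl _ _).mul hTS
    _ = fun z => (z - z₀) * G.derivative.eval z := by
        ext z; rw [hS]; simp only [eval_mul, eval_pow, eval_sub, eval_X, eval_C]; ring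

theorem HasFDerivAt.mul_continuousAt_of_eq_zero {𝕜 E 𝔸 : Type*} [NontriviallyNormedField 𝕜]
    [NormedAddCommGroup E] [NormedSpace 𝕜 E] [NormedCommRing 𝔸] [NormedAlgebra 𝕜 𝔸]
    {f g : E → 𝔸} {f' : E →L[𝕜] 𝔸} {x : E}
    (hf : HasFDerivAt f f' x) (hfx : f x = 0) (hg : ContinuousAt g x) :
    HasFDerivAt (fun y => f y * g y) (g x • f') x := by
  refine .of_isLittleO ?_
  have hrem : (fun y => (f y - f x - f' (y - x)) * g y) =o[𝓝 x] fun y => ‖y - x‖ * 1 :=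
    (isLittleO_norm_right.2 hf.isLittleO).mul_isBigO (hg.tendsto.isBigO_one ℝ)
  have hlin : (fun y => f' (y - x) * (g y - g x)) =o[𝓝 x] fun y => ‖y - x‖ * 1 :=
    (isBigO_norm_right.2 (f'.isBigO_sub _ x)).mul_isLittleO
      ((isLittleO_one_iff ℝ).2 (by simpa using hg.tendsto.sub_const (g x)))
  refine isLittleO_norm_right.1 ((hrem.add hlin).congr (fun y => ?_) fun y => mul_one _)
  simp only [hfx, smul_apply, smul_eq_mul]
  ring

theorem hasFDerivAt_eval_of_derivative_eval_eq_zero {𝕜 𝕜' E ι : Type*}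
    [NontriviallyNormedField 𝕜] [NormedField 𝕜'] [CharZero 𝕜'] [NormedAlgebra 𝕜 𝕜']
    [NormedAddCommGroup E] [NormedSpace 𝕜 E]
    (s : Finset ι) (Q : 𝕜'[X]) (B : ι → 𝕜'[X]) {u : ι → E → 𝕜'} {u' : ι → E →L[𝕜] 𝕜'}
    {P : E → 𝕜'[X]} {lam : E → 𝕜'} {y₀ : E}
    (hP : ∀ y, P y = Q + ∑ i ∈ s, C (u i y) * B i)
    (hu : ∀ i ∈ s, HasFDerivAt (u i) (u' i) y₀) (hlam : ContinuousAt lam y₀)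
    (hcrit : ∀ᶠ y in 𝓝 y₀, (P y).derivative.eval (lam y) = 0) :
    HasFDerivAt (fun y => (P y).eval (lam y)) (∑ i ∈ s, (B i).eval (lam y₀) • u' i) y₀ := by
  have hPsub : ∀ y, P y - P y₀ = ∑ i ∈ s, C (u i y - u i y₀) * B i := fun y => by
    simp only [hP, add_sub_add_left_eq_sub, ← Finset.sum_sub_distrib, C_sub, sub_mul]
  have hcoeff : HasFDerivAt (fun y => ∑ i ∈ s, (u i y - u i y₀) * (B i).eval (lam y))
      (∑ i ∈ s, (B i).eval (lam y₀) • u' i) y₀ :=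
    .fun_sum fun i hi => ((hu i hi).sub_const _).mul_continuousAt_of_eq_zero (sub_self _)
      ((B i).continuous.continuousAt.comp hlam)
  have hD : (fun y => (P y₀).derivative.eval (lam y)) =O[𝓝 y₀] fun y => ‖y - y₀‖ := by
    have hsum : (fun y => ∑ i ∈ s, (u i y - u i y₀) * (B i).derivative.eval (lam y))
        =O[𝓝 y₀] fun y => ‖y - y₀‖ * 1 :=
      .fun_sum fun i hi => (isBigO_norm_right.2 (hu i hi).differentiableAt.isBigO_sub).mul
        (((B i).derivative.continuous.continuousAt.comp hlam).tendsto.isBigO_one ℝ)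
    refine (hsum.neg_left.trans_eventuallyEq (.of_eq (funext fun y => mul_one _))).congr' ?_ .rfl
    filter_upwards [hcrit] with y hy
    have hdiff : (P y).derivative.eval (lam y) - (P y₀).derivative.eval (lam y) =
        ∑ i ∈ s, (u i y - u i y₀) * (B i).derivative.eval (lam y) := by
      rw [← eval_sub, ← derivative_sub, hPsub]
      simp only [derivative_sum, derivative_C_mul, eval_finsetSum, eval_mul, eval_C]
    linear_combination hdiff - hy
  have hpoint : (fun y => (P y₀).eval (lam y) - (P y₀).eval (lam y₀))
      =o[𝓝 y₀] fun y => y - y₀ := by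
    have hlam' : (fun y => lam y - lam y₀) =o[𝓝 y₀] fun _ => (1 : ℝ) :=
      (isLittleO_one_iff ℝ).2 (by simpa using hlam.tendsto.sub_const (lam y₀))
    refine isLittleO_norm_right.1 ?_
    simpa [Function.comp_def] using
      ((P y₀).eval_sub_eval_isBigO_mul_derivative (lam y₀)).comp_tendsto hlam.tendsto
        |>.trans_isLittleO (hlam'.mul_isBigO hD)
  have hpoint' : HasFDerivAt (fun y => (P y₀).eval (lam y) - (P y₀).eval (lam y₀))
      (0 : E →L[𝕜] 𝕜') y₀ :=
    .of_isLittleO (by simpa using hpoint)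
  refine (((hcoeff.const_add ((P y₀).eval (lam y₀))).add hpoint').congr_fderiv (add_zero _))
    |>.congr_of_eventuallyEq (.of_forall fun y => ?_)
  have hsplit := congrArg (eval (lam y)) (hPsub y)
  simp only [eval_sub, eval_finsetSum, eval_mul, eval_C] at hsplit
  simp only [Pi.add_apply]
  linear_combination hsplit

theorem statement1_general
    (m n : ℕ)
    (u : ℕ → (Fin m → ℝ) → ℂ)
    (hu : ∀ i ∈ Finset.Icc 1 n, ContDiff ℝ 1 (u i))
    (lam : (Fin m → ℝ) → ℂ) (hlam : Continuous lam)
    (F : ℂ → (Fin m → ℝ) → ℂ)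
    (hF : ∀ (p : ℂ) (y : Fin m → ℝ),
        F p y = p ^ (n + 1) / ((n : ℂ) + 1) + ∑ i ∈ Finset.Icc 1 n, u i y * p ^ (n - i))
    (hcrit : ∀ y : Fin m → ℝ, deriv (fun p : ℂ => F p y) (lam y) = 0) :
    ContDiff ℝ 1 (fun y => F (lam y) y) ∧
    ∀ (y : Fin m → ℝ) (j : Fin m),
      fderiv ℝ (fun y => F (lam y) y) y (Pi.single j 1) =
        ∑ i ∈ Finset.Icc 1 n, fderiv ℝ (u i) y (Pi.single j 1) * (lam y) ^ (n - i) := by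
  set P : (Fin m → ℝ) → ℂ[X] := fun y =>
    C ((n : ℂ) + 1)⁻¹ * X ^ (n + 1) + ∑ i ∈ Finset.Icc 1 n, C (u i y) * X ^ (n - i)
  have hPF : ∀ y p, (P y).eval p = F p y := fun y p => by
    simp [P, hF, eval_finsetSum, div_eq_inv_mul]
  have hder : ∀ y₀, HasFDerivAt (fun y => F (lam y) y)
      (∑ i ∈ Finset.Icc 1 n, lam y₀ ^ (n - i) • fderiv ℝ (u i) y₀) y₀ := fun y₀ => by
    have h := hasFDerivAt_eval_of_derivative_eval_eq_zero (P := P) (Finset.Icc 1 n) _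
      (fun i => X ^ (n - i)) (fun y => rfl)
      (fun i hi => ((hu i hi).differentiable one_ne_zero y₀).hasFDerivAt) hlam.continuousAt
      (.of_forall fun y => by simp only [← Polynomial.deriv, hPF, hcrit])
    simpa [hPF] using h
  refine ⟨contDiff_one_iff_fderiv.2 ⟨fun y => (hder y).differentiableAt, ?_⟩, fun y j => ?_⟩
  · rw [funext fun y => (hder y).fderiv]
    exact continuous_finsetSum _ fun i hi =>
      (hlam.pow _).smul ((hu i hi).continuous_fderiv one_ne_zero)
  · simp [(hder y).fderiv, mul_comm]

/-- For a family of polynomials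
`F(p,y) = p^{n+1}/(n+1) + u₁(y)p^{n−1} + ⋯ + uₙ(y)` with `C¹` coefficients on `ℝᵐ`,
and a continuously chosen critical point `λ(y)` (i.e. `∂ₚF(λ(y),y) = 0`), the
critical value `r(y) = F(λ(y),y)` is `C¹` and
`∂_{yⱼ} r(y) = Σᵢ ∂_{yⱼ} uᵢ(y)·λ(y)^{n−i}`. -/
theorem statement1
    (m n : ℕ) (hm : 1 ≤ m) (hn : 1 ≤ n)
    (u : ℕ → (Fin m → ℝ) → ℂ)
    (hu : ∀ i ∈ Finset.Icc 1 n, ContDiff ℝ 1 (u i))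
    (lam : (Fin m → ℝ) → ℂ) (hlam : Continuous lam)
    (F : ℂ → (Fin m → ℝ) → ℂ)
    (hF : ∀ (p : ℂ) (y : Fin m → ℝ),
        F p y = p ^ (n + 1) / ((n : ℂ) + 1) + ∑ i ∈ Finset.Icc 1 n, u i y * p ^ (n - i))
    (hcrit : ∀ y : Fin m → ℝ, deriv (fun p : ℂ => F p y) (lam y) = 0) :
    ContDiff ℝ 1 (fun y => F (lam y) y) ∧
    ∀ (y : Fin m → ℝ) (j : Fin m),
      fderiv ℝ (fun y => F (lam y) y) y (Pi.single j 1) =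
        ∑ i ∈ Finset.Icc 1 n, fderiv ℝ (u i) y (Pi.single j 1) * (lam y) ^ (n - i) :=
  statement1_general m n u hu lam hlam F hF hcrit
end

section
/- Let n = 2l+1 be odd, and let U = (u₁,...,uₙ) : ℝ² → ℝⁿ be a C², doubly periodic solution of the dispersionless Lax reduction of the Benney chain, and set F(p,t,x) = p^{n+1}/(n+1) + u₁(t,x)p^{n−1} + ⋯ + uₙ(t,x). Suppose there exist continuous functions μ : ℝ² → ℝ and λ₁,...,λ_l : ℝ² → ℂ with Im λⱼ ≠ 0 everywhere that continuously factorize the characteristic polynomial: pⁿ + (n−1)u₁p^{n−2} + ⋯ + u_{n−1} = (p − μ)·∏_{j=1}^{l}(p − λⱼ)(p − conj(λⱼ)) for all (t,x). Then the functions ρ(t,x) := F(μ(t,x),t,x) and rⱼ(t,x) := F(λⱼ(t,x),t,x) (j = 1,...,l) are C¹ on ℝ² and satisfy the transport equations ∂_t ρ + μ(t,x)·∂_x ρ = 0 and ∂_t rⱼ + λⱼ(t,x)·∂_x rⱼ = 0 (the latter an identity of ℂ-valued functions). -/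
/-- Partial derivative in the first variable `t` of a function on `ℝ × ℝ`. -/
noncomputable def pt {E : Type*} [NormedAddCommGroup E] [NormedSpace ℝ E]
    (f : ℝ × ℝ → E) (q : ℝ × ℝ) : E := fderiv ℝ f q (1, 0)

/-- Partial derivative in the second variable `x` of a function on `ℝ × ℝ`. -/
noncomputable def px {E : Type*} [NormedAddCommGroup E] [NormedSpace ℝ E]
    (f : ℝ × ℝ → E) (q : ℝ × ℝ) : E := fderiv ℝ f q (0, 1)

/-- `u 1, …, u n` (with the convention `u 0 = 0`) solve the dispersionless Lax
reduction of the Benney moments chain. -/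
def IsBenney (n : ℕ) (u : ℕ → ℝ × ℝ → ℝ) : Prop :=
  (∀ q, u 0 q = 0) ∧
  (∀ i ∈ Finset.Icc 1 (n - 1), ∀ q,
      pt (u i) q + px (u (i + 1)) q = ((n : ℝ) - i + 1) * u (i - 1) q * px (u 1) q) ∧
  (∀ q, pt (u n) q = u (n - 1) q * px (u 1) q)

/-
`∂ₚF(·, q)` is the characteristic polynomial, so `μ` and the `λⱼ` are continuous roots of `∂ₚF`.
At such a root `ν`, the critical value `q ↦ F(ν(q), q)` is differentiable with derivative
`∂_q F(ν(q), q)`, although `ν` itself need not be: near a root of multiplicity `m` of `∂ₚF`, `F`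
varies like the `(m+1)`-st power of `p - ν(q₀)`, while `ν(q)` is a root of a perturbation of
`∂ₚF(·, q₀)` of size `O(q - q₀)`. Evaluating the conservation equation
`∂ₜF + p ∂ₓF = (∂ₓu₁) ∂ₚF` at `p = ν(q)` then gives `∂ₜr + ν ∂ₓr = 0`.
-/

open Finset Polynomial Filter Asymptotics Topology

section
variable {α 𝕜 F : Type*} [NormedField 𝕜] [SeminormedAddCommGroup F] {l : Filter α}

theorem Asymptotics.IsBigO.mul_isLittleO_one {f h : α → 𝕜} {g : α → F} (hf : f =O[l] g)
    (hh : Tendsto h l (𝓝 0)) : (fun a => f a * h a) =o[l] g := by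
  have := hf.norm_right.mul_isLittleO ((isLittleO_one_iff ℝ).2 hh)
  simpa only [mul_one, isLittleO_norm_right] using this

variable {R : α → 𝕜[X]} {N : ℕ} {g : α → F}

theorem Polynomial.isBigO_eval_of_coeff (hdeg : ∀ a, (R a).natDegree < N)
    (hcoeff : ∀ k, (fun a => (R a).coeff k) =O[l] g) {w : α → 𝕜} {w₀ : 𝕜}
    (hw : Tendsto w l (𝓝 w₀)) : (fun a => (R a).eval (w a)) =O[l] g := by
  simp only [eval_eq_sum_range' (hdeg _)]
  refine IsBigO.fun_sum fun k _ => ?_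
  simpa only [mul_one, isBigO_norm_right] using
    (hcoeff k).norm_right.mul ((hw.pow k).isBigO_one ℝ)

theorem Polynomial.isLittleO_eval_sub_eval_of_coeff (hdeg : ∀ a, (R a).natDegree < N)
    (hcoeff : ∀ k, (fun a => (R a).coeff k) =O[l] g) {w : α → 𝕜} {w₀ : 𝕜}
    (hw : Tendsto w l (𝓝 w₀)) : (fun a => (R a).eval (w a) - (R a).eval w₀) =o[l] g := by
  simp only [eval_eq_sum_range' (hdeg _), ← Finset.sum_sub_distrib, ← mul_sub]
  refine IsLittleO.fun_sum fun k _ => (hcoeff k).mul_isLittleO_one ?_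
  simpa using (hw.pow k).sub_const (w₀ ^ k)

end

theorem Polynomial.isBigO_eval_sub_eval_derivative_mul {𝕜 : Type*} [NormedField 𝕜] [CharZero 𝕜]
    (P : 𝕜[X]) (z₀ : 𝕜) :
    (fun z => P.eval z - P.eval z₀) =O[𝓝 z₀] fun z => P.derivative.eval z * (z - z₀) := by
  set Q := P - C (P.eval z₀) with hQ
  have hQ' : Q.derivative = P.derivative := by simp [hQ]
  have hQz₀ : Q.IsRoot z₀ := by simp [hQ]
  have hQeval : ∀ z, Q.eval z = P.eval z - P.eval z₀ := by simp [hQ]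
  by_cases hP' : P.derivative = 0
  · have hPC := eq_C_of_natDegree_eq_zero (derivative_eq_zero.1 hP')
    refine (isBigO_zero _ _).congr_left fun z => ?_
    rw [hPC, eval_C, eval_C, sub_self]
  set m := P.derivative.rootMultiplicity z₀
  set H := P.derivative /ₘ (X - C z₀) ^ m
  have hH : H.eval z₀ ≠ 0 := eval_divByMonic_pow_rootMultiplicity_ne_zero z₀ hP'
  have hQne : Q ≠ 0 := fun h => hP' (by rw [← hQ', h, derivative_zero])
  have hmQ : Q.rootMultiplicity z₀ = m + 1 := by
    have := derivative_rootMultiplicity_of_root hQz₀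
    have := (rootMultiplicity_pos hQne).2 hQz₀
    rw [hQ'] at *; omega
  obtain ⟨K, hK⟩ : (X - C z₀) ^ (m + 1) ∣ Q := hmQ ▸ pow_rootMultiplicity_dvd Q z₀
  have hKH : (fun z => K.eval z) =O[𝓝 z₀] fun z => H.eval z := by
    refine isBigO_of_div_tendsto_nhds ?_ (K.eval z₀ / H.eval z₀) ?_
    · filter_upwards [H.continuous.continuousAt.eventually_ne hH] with z hz h using absurd h hz
    · exact (K.continuous.tendsto z₀).div (H.continuous.tendsto z₀) hH
  have := (isBigO_refl (fun z => (z - z₀) ^ (m + 1)) (𝓝 z₀)).mul hKH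
  refine this.congr (fun z => ?_) (fun z => ?_)
  · rw [← hQeval, hK, eval_mul]; simp
  · rw [← pow_mul_divByMonic_rootMultiplicity_eq P.derivative z₀, eval_mul]
    simp only [eval_pow, eval_sub, eval_X, eval_C, m, H]; ring

theorem hasFDerivAt_eval_of_isRoot_derivative {𝕜 E : Type*} [RCLike 𝕜]
    [NormedAddCommGroup E] [NormedSpace ℝ E] {P : E → 𝕜[X]} {N : ℕ}
    (hdeg : ∀ q, (P q).natDegree < N) {q₀ : E}
    (hcoeff : ∀ k, DifferentiableAt ℝ (fun q => (P q).coeff k) q₀)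
    {ν : E → 𝕜} (hν : ContinuousAt ν q₀) (hroot : ∀ q, (P q).derivative.IsRoot (ν q))
    {D : E →L[ℝ] 𝕜} (hD : HasFDerivAt (fun q => (P q).eval (ν q₀)) D q₀) :
    HasFDerivAt (fun q => (P q).eval (ν q)) D q₀ := by
  set R := fun q => P q - P q₀
  have hRdeg : ∀ q, (R q).natDegree < N := fun q =>
    (natDegree_sub_le _ _).trans_lt (max_lt (hdeg q) (hdeg q₀))
  have hRcoeff : ∀ k, (fun q => (R q).coeff k) =O[𝓝 q₀] fun q => q - q₀ := fun k => by
    simpa only [R, coeff_sub] using (hcoeff k).isBigO_sub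
  have hR'deg : ∀ q, (R q).derivative.natDegree < N := fun q =>
    (natDegree_derivative_le _).trans_lt ((Nat.sub_le _ _).trans_lt (hRdeg q))
  have hR'coeff : ∀ k, (fun q => (R q).derivative.coeff k) =O[𝓝 q₀] fun q => q - q₀ :=
    fun k => by simpa only [coeff_derivative, mul_comm] using (hRcoeff (k + 1)).const_mul_left _
  have hbase : (fun q => (P q₀).eval (ν q) - (P q₀).eval (ν q₀)) =o[𝓝 q₀] fun q => q - q₀ := by
    refine ((P q₀).isBigO_eval_sub_eval_derivative_mul (ν q₀)).comp_tendsto hν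
      |>.trans_isLittleO ?_
    -- `ν q` is a root of `(P q)'`, which differs from `(P q₀)'` by `O(q - q₀)`.
    have hderiv : (fun q => (P q₀).derivative.eval (ν q)) =O[𝓝 q₀] fun q => q - q₀ := by
      refine ((isBigO_eval_of_coeff hR'deg hR'coeff hν).neg_left).congr_left fun q => ?_
      simp [R, derivative_sub, (hroot q).eq_zero]
    exact hderiv.mul_isLittleO_one (by simpa using hν.sub_const (ν q₀))
  have hmixed := isLittleO_eval_sub_eval_of_coeff hRdeg hRcoeff hν
  rw [hasFDerivAt_iff_isLittleO] at hD ⊢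
  refine ((hmixed.add hbase).add hD).congr_left fun q => ?_
  simp only [R, eval_sub]
  ring

theorem Finset.sum_Icc_one_eq_sum_range {M : Type*} [AddCommMonoid M] (f : ℕ → M) (n : ℕ) :
    ∑ i ∈ Icc 1 n, f i = ∑ k ∈ range n, f (k + 1) := by
  rw [← Ico_add_one_right_eq_Icc, sum_Ico_eq_sum_range, Nat.add_sub_cancel]
  simp only [add_comm 1]

-- Coefficientwise form of `∂ₜF + p ∂ₓF = (∂ₓu₁) ∂ₚF` for a solution of the chain.
theorem benney_sum_identity {R : Type*} [CommRing R] {n : ℕ} (hn : 1 ≤ n) {A B v : ℕ → R}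
    (hv0 : v 0 = 0)
    (hmid : ∀ i ∈ Icc 1 (n - 1), A i + B (i + 1) = ((n : R) - i + 1) * v (i - 1) * B 1)
    (htop : A n = v (n - 1) * B 1) (p : R) :
    ∑ i ∈ Icc 1 n, A i * p ^ (n - i) + p * ∑ i ∈ Icc 1 n, B i * p ^ (n - i) =
      B 1 * (p ^ n + ∑ i ∈ Icc 1 (n - 1), ((n : R) - i) * v i * p ^ (n - 1 - i)) := by
  obtain ⟨m, rfl⟩ : ∃ m, n = m + 1 := ⟨n - 1, by omega⟩
  simp only [Nat.add_sub_cancel, sum_Icc_one_eq_sum_range, Nat.add_sub_add_right] at *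
  push_cast at *
  have hp : ∀ k < m, p * p ^ (m - (k + 1)) = p ^ (m - k) := fun k hk => by
    rw [← pow_succ', Nat.sub_add_eq, Nat.sub_add_cancel (by omega)]
  have hA : ∑ k ∈ range (m + 1), A (k + 1) * p ^ (m - k) =
      ∑ k ∈ range m, A (k + 1) * p ^ (m - k) + v m * B 1 := by
    rw [sum_range_succ, ← htop]; simp
  have hB : p * ∑ k ∈ range (m + 1), B (k + 1) * p ^ (m - k) =
      ∑ k ∈ range m, B (k + 2) * p ^ (m - k) + B 1 * p ^ (m + 1) := by
    rw [mul_sum, sum_range_succ']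
    congr 1
    · refine sum_congr rfl fun k hk => ?_
      rw [← hp k (mem_range.1 hk)]; ring
    · simp only [zero_add, tsub_zero]; ring
  have hv : ∑ k ∈ range m, ((m : R) + 1 - k) * v k * p ^ (m - k) + v m =
      ∑ k ∈ range m, ((m : R) + 1 - (k + 1)) * v (k + 1) * p ^ (m - (k + 1)) := by
    have h₁ := sum_range_succ (fun k => ((m : R) + 1 - k) * v k * p ^ (m - k)) m
    have h₂ := sum_range_succ' (fun k => ((m : R) + 1 - k) * v k * p ^ (m - k)) m
    simp only [Nat.sub_self, pow_zero, hv0, Nat.cast_add, Nat.cast_one] at h₁ h₂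
    linear_combination h₂ - h₁
  have hAB : ∑ k ∈ range m, A (k + 1) * p ^ (m - k) + ∑ k ∈ range m, B (k + 2) * p ^ (m - k) =
      B 1 * ∑ k ∈ range m, ((m : R) + 1 - k) * v k * p ^ (m - k) := by
    rw [← sum_add_distrib, mul_sum]
    refine sum_congr rfl fun k hk => ?_
    have := hmid (k + 1) (by simp only [mem_Icc]; have := mem_range.1 hk; omega)
    push_cast at this
    rw [← add_mul, this]
    ring
  rw [hA, hB]
  linear_combination hAB + B 1 * hv

noncomputable def laxFunction (n : ℕ) (u : ℕ → ℝ × ℝ → ℝ) (q : ℝ × ℝ) : ℂ[X] :=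
  C ((n + 1 : ℂ)⁻¹) * X ^ (n + 1) + ∑ i ∈ Icc 1 n, C (u i q : ℂ) * X ^ (n - i)

noncomputable def laxFunctionFDeriv (n : ℕ) (u : ℕ → ℝ × ℝ → ℝ) (p : ℂ) (q : ℝ × ℝ) :
    ℝ × ℝ →L[ℝ] ℂ :=
  ∑ i ∈ Icc 1 n, p ^ (n - i) • (Complex.ofRealCLM ∘L fderiv ℝ (u i) q)

section
variable {n : ℕ} {u : ℕ → ℝ × ℝ → ℝ}

theorem eval_laxFunction (p : ℂ) (q : ℝ × ℝ) :
    (laxFunction n u q).eval p = p ^ (n + 1) / ((n : ℂ) + 1) +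
      ∑ i ∈ Icc 1 n, ((u i q : ℝ) : ℂ) * p ^ (n - i) := by
  simp [laxFunction, eval_finsetSum, div_eq_inv_mul]

theorem eval_derivative_laxFunction (p : ℂ) (q : ℝ × ℝ) :
    (laxFunction n u q).derivative.eval p = p ^ n + ∑ i ∈ Icc 1 (n - 1),
      ((((n : ℝ) - i) * u i q : ℝ) : ℂ) * p ^ (n - 1 - i) := by
  have hsub : Icc 1 (n - 1) ⊆ Icc 1 n := Icc_subset_Icc_right (Nat.sub_le n 1)
  simp only [laxFunction, derivative_add, derivative_sum, derivative_C_mul_X_pow, eval_add,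
    eval_finsetSum, eval_C_mul, eval_X_pow]
  congr 1
  · push_cast; field_simp
  · rw [← sum_subset hsub]
    · refine sum_congr rfl fun i hi => ?_
      have := mem_Icc.1 hi
      rw [show n - 1 - i = n - i - 1 by omega, Nat.cast_sub (by omega : i ≤ n)]
      push_cast
      ring
    · intro i hi hi'
      have : i = n := by simp only [mem_Icc] at hi hi'; omega
      simp [this]

theorem natDegree_laxFunction_lt (q : ℝ × ℝ) : (laxFunction n u q).natDegree < n + 2 := by
  refine (natDegree_add_le _ _).trans_lt (max_lt ?_ ?_)
  · exact (natDegree_C_mul_X_pow_le _ _).trans_lt (Nat.lt_succ_self _)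
  · refine (natDegree_sum_le_of_forall_le _ _ (n := n) fun i _ => ?_).trans_lt (by omega)
    exact (natDegree_C_mul_X_pow_le _ _).trans (Nat.sub_le n i)

theorem differentiableAt_coeff_laxFunction {q₀ : ℝ × ℝ}
    (hu : ∀ i ∈ Icc 1 n, DifferentiableAt ℝ (u i) q₀) (k : ℕ) :
    DifferentiableAt ℝ (fun q => (laxFunction n u q).coeff k) q₀ := by
  simp only [laxFunction, coeff_add, finsetSum_coeff, coeff_C_mul_X_pow]
  refine (differentiableAt_const _).add (DifferentiableAt.fun_sum fun i hi => ?_)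
  split_ifs
  · exact Complex.ofRealCLM.differentiableAt.comp q₀ (hu i hi)
  · exact differentiableAt_const _

theorem hasFDerivAt_eval_laxFunction {q₀ : ℝ × ℝ}
    (hu : ∀ i ∈ Icc 1 n, DifferentiableAt ℝ (u i) q₀) (p : ℂ) :
    HasFDerivAt (fun q => (laxFunction n u q).eval p) (laxFunctionFDeriv n u p q₀) q₀ := by
  simp only [eval_laxFunction, laxFunctionFDeriv]
  refine (HasFDerivAt.fun_sum fun i hi => ?_).const_add _
  exact ((Complex.ofRealCLM.hasFDerivAt.comp q₀ (hu i hi).hasFDerivAt).mul_const _)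

theorem laxFunctionFDeriv_apply (p : ℂ) (q v : ℝ × ℝ) :
    laxFunctionFDeriv n u p q v =
      ∑ i ∈ Icc 1 n, ((fderiv ℝ (u i) q v : ℝ) : ℂ) * p ^ (n - i) := by
  simp [laxFunctionFDeriv, mul_comm]

theorem laxFunctionFDeriv_transport (hn : 1 ≤ n) (hsol : IsBenney n u) (p : ℂ) (q : ℝ × ℝ) :
    laxFunctionFDeriv n u p q (1, 0) + p * laxFunctionFDeriv n u p q (0, 1) =
      ((px (u 1) q : ℝ) : ℂ) * (laxFunction n u q).derivative.eval p := by
  obtain ⟨hu0, hmid, htop⟩ := hsol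
  have := benney_sum_identity hn (A := fun i => ((pt (u i) q : ℝ) : ℂ))
    (B := fun i => ((px (u i) q : ℝ) : ℂ))
    (v := fun i => (u i q : ℂ)) (by simp [hu0])
    (fun i hi => by exact_mod_cast hmid i hi q) (by exact_mod_cast htop q) p
  rw [laxFunctionFDeriv_apply, laxFunctionFDeriv_apply, eval_derivative_laxFunction]
  push_cast
  exact this

theorem continuous_laxFunctionFDeriv (hu : ∀ i ∈ Icc 1 n, ContDiff ℝ 1 (u i)) {ν : ℝ × ℝ → ℂ}
    (hν : Continuous ν) : Continuous fun q => laxFunctionFDeriv n u (ν q) q := by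
  refine continuous_finsetSum _ fun i hi => (hν.pow _).smul ?_
  exact (ContinuousLinearMap.compL ℝ (ℝ × ℝ) ℝ ℂ Complex.ofRealCLM).continuous.comp
    ((hu i hi).continuous_fderiv one_ne_zero)

theorem hasFDerivAt_eval_laxFunction_of_isRoot (hu : ∀ i ∈ Icc 1 n, ContDiff ℝ 1 (u i))
    {ν : ℝ × ℝ → ℂ} (hν : Continuous ν) (hroot : ∀ q, (laxFunction n u q).derivative.IsRoot (ν q))
    (q₀ : ℝ × ℝ) :
    HasFDerivAt (fun q => (laxFunction n u q).eval (ν q)) (laxFunctionFDeriv n u (ν q₀) q₀) q₀ :=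
  have hu' : ∀ i ∈ Icc 1 n, DifferentiableAt ℝ (u i) q₀ := fun i hi =>
    (hu i hi).differentiable one_ne_zero q₀
  hasFDerivAt_eval_of_isRoot_derivative natDegree_laxFunction_lt
    (differentiableAt_coeff_laxFunction hu') hν.continuousAt hroot
    (hasFDerivAt_eval_laxFunction hu' _)

theorem contDiff_eval_laxFunction_and_transport (hn : 1 ≤ n) (hsol : IsBenney n u)
    (hu : ∀ i ∈ Icc 1 n, ContDiff ℝ 1 (u i)) {ν : ℝ × ℝ → ℂ} (hν : Continuous ν)
    (hroot : ∀ q, (laxFunction n u q).derivative.IsRoot (ν q)) :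
    ContDiff ℝ 1 (fun q => (laxFunction n u q).eval (ν q)) ∧
      ∀ q, pt (fun q => (laxFunction n u q).eval (ν q)) q +
        ν q * px (fun q => (laxFunction n u q).eval (ν q)) q = 0 := by
  have hder := hasFDerivAt_eval_laxFunction_of_isRoot hu hν hroot
  have hfderiv : fderiv ℝ (fun q => (laxFunction n u q).eval (ν q)) =
      fun q => laxFunctionFDeriv n u (ν q) q := funext fun q => (hder q).fderiv
  refine ⟨contDiff_one_iff_fderiv.2 ⟨fun q => (hder q).differentiableAt, ?_⟩, fun q => ?_⟩
  · exact hfderiv ▸ continuous_laxFunctionFDeriv hu hν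
  · rw [pt, px, hfderiv, laxFunctionFDeriv_transport hn hsol, (hroot q).eq_zero, mul_zero]
end

theorem ContDiff.re_transport {f : ℝ × ℝ → ℂ} (hf : ContDiff ℝ 1 f) {c : ℝ × ℝ → ℝ}
    (htr : ∀ q, pt f q + c q * px f q = 0) :
    ContDiff ℝ 1 (fun q => (f q).re) ∧
      ∀ q, pt (fun q => (f q).re) q + c q * px (fun q => (f q).re) q = 0 := by
  have hfderiv : ∀ q, fderiv ℝ (fun q => (f q).re) q = Complex.reCLM ∘L fderiv ℝ f q := fun q =>
    (Complex.reCLM.hasFDerivAt.comp q (hf.differentiable one_ne_zero q).hasFDerivAt).fderiv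
  refine ⟨Complex.reCLM.contDiff.comp hf, fun q => ?_⟩
  have := congrArg Complex.re (htr q)
  simpa [pt, px, hfderiv] using this

theorem statement3_general
    (l n : ℕ) (hn : n = 2 * l + 1)
    (u : ℕ → ℝ × ℝ → ℝ)
    (hsmooth : ∀ i ∈ Finset.Icc 1 n, ContDiff ℝ 2 (u i))
    (hsol : IsBenney n u)
    (μ : ℝ × ℝ → ℝ) (hμ : Continuous μ)
    (lam : ℕ → ℝ × ℝ → ℂ)
    (hlamcont : ∀ j ∈ Finset.Icc 1 l, Continuous (lam j))
    (hfact : ∀ q : ℝ × ℝ, ∀ p : ℂ,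
        p ^ n + ∑ i ∈ Finset.Icc 1 (n - 1),
            ((((n : ℝ) - i) * u i q : ℝ) : ℂ) * p ^ (n - 1 - i)
        = (p - (μ q : ℂ)) *
            ∏ j ∈ Finset.Icc 1 l,
              ((p - lam j q) * (p - (starRingEnd ℂ) (lam j q))))
    (ρ : ℝ × ℝ → ℝ)
    (hρ : ∀ q : ℝ × ℝ,
        ρ q = (μ q) ^ (n + 1) / ((n : ℝ) + 1) + ∑ i ∈ Finset.Icc 1 n, u i q * (μ q) ^ (n - i))
    (r : ℕ → ℝ × ℝ → ℂ)
    (hr : ∀ j ∈ Finset.Icc 1 l, ∀ q : ℝ × ℝ,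
        r j q = (lam j q) ^ (n + 1) / ((n : ℂ) + 1) +
          ∑ i ∈ Finset.Icc 1 n, ((u i q : ℝ) : ℂ) * (lam j q) ^ (n - i)) :
    (ContDiff ℝ 1 ρ ∧ ∀ q : ℝ × ℝ, pt ρ q + μ q * px ρ q = 0) ∧
    (∀ j ∈ Finset.Icc 1 l,
      ContDiff ℝ 1 (r j) ∧ ∀ q : ℝ × ℝ, pt (r j) q + lam j q * px (r j) q = 0) := by
  have hu : ∀ i ∈ Icc 1 n, ContDiff ℝ 1 (u i) := fun i hi => (hsmooth i hi).of_le (by norm_num)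
  have hn1 : 1 ≤ n := by omega
  have hfact' : ∀ q p, (laxFunction n u q).derivative.eval p = (p - μ q) *
      ∏ j ∈ Icc 1 l, ((p - lam j q) * (p - (starRingEnd ℂ) (lam j q))) := fun q p =>
    (eval_derivative_laxFunction p q).trans (hfact q p)
  refine ⟨?_, fun j hj => ?_⟩
  · have hρ' : ρ = fun q => ((laxFunction n u q).eval (μ q : ℂ)).re := funext fun q => by
      rw [eval_laxFunction, ← Complex.ofReal_re (ρ q), hρ]
      push_cast
      ring_nf
    have hroot : ∀ q, (laxFunction n u q).derivative.IsRoot (μ q : ℂ) := fun q => by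
      rw [IsRoot, hfact', sub_self, zero_mul]
    obtain ⟨hC1, htr⟩ := contDiff_eval_laxFunction_and_transport hn1 hsol hu
      (Complex.continuous_ofReal.comp hμ) hroot
    exact hρ' ▸ hC1.re_transport htr
  · have hroot : ∀ q, (laxFunction n u q).derivative.IsRoot (lam j q) := fun q => by
      rw [IsRoot, hfact']
      exact mul_eq_zero_of_right _ (prod_eq_zero hj (by rw [sub_self, zero_mul]))
    have hrj : r j = fun q => (laxFunction n u q).eval (lam j q) := funext fun q => by
      rw [hr j hj, eval_laxFunction]
    exact hrj ▸ contDiff_eval_laxFunction_and_transport hn1 hsol hu (hlamcont j hj) hroot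

/-- Under the continuous-factorization hypothesis with one real
eigenvalue `μ` and `l` non-real eigenvalues `λⱼ`, the critical values
`ρ = F(μ(t,x),t,x)` and `rⱼ = F(λⱼ(t,x),t,x)` of
`F(p,t,x) = p^{n+1}/(n+1) + u₁p^{n−1} + ⋯ + uₙ` are `C¹` Riemann invariants:
`∂ₜρ + μ·∂ₓρ = 0` and `∂ₜrⱼ + λⱼ·∂ₓrⱼ = 0`. -/
theorem statement3
    (l n : ℕ) (hl : 1 ≤ l) (hn : n = 2 * l + 1)
    (u : ℕ → ℝ × ℝ → ℝ)
    (hsmooth : ∀ i ∈ Finset.Icc 1 n, ContDiff ℝ 2 (u i))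
    (hper : ∀ i ∈ Finset.Icc 1 n, ∀ t x : ℝ,
        u i (t + 1, x) = u i (t, x) ∧ u i (t, x + 1) = u i (t, x))
    (hsol : IsBenney n u)
    (μ : ℝ × ℝ → ℝ) (hμ : Continuous μ)
    (lam : ℕ → ℝ × ℝ → ℂ)
    (hlamcont : ∀ j ∈ Finset.Icc 1 l, Continuous (lam j))
    (hlamim : ∀ j ∈ Finset.Icc 1 l, ∀ q : ℝ × ℝ, (lam j q).im ≠ 0)
    (hfact : ∀ q : ℝ × ℝ, ∀ p : ℂ,
        p ^ n + ∑ i ∈ Finset.Icc 1 (n - 1),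
            ((((n : ℝ) - i) * u i q : ℝ) : ℂ) * p ^ (n - 1 - i)
        = (p - (μ q : ℂ)) *
            ∏ j ∈ Finset.Icc 1 l,
              ((p - lam j q) * (p - (starRingEnd ℂ) (lam j q))))
    (ρ : ℝ × ℝ → ℝ)
    (hρ : ∀ q : ℝ × ℝ,
        ρ q = (μ q) ^ (n + 1) / ((n : ℝ) + 1) + ∑ i ∈ Finset.Icc 1 n, u i q * (μ q) ^ (n - i))
    (r : ℕ → ℝ × ℝ → ℂ)
    (hr : ∀ j ∈ Finset.Icc 1 l, ∀ q : ℝ × ℝ,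
        r j q = (lam j q) ^ (n + 1) / ((n : ℂ) + 1) +
          ∑ i ∈ Finset.Icc 1 n, ((u i q : ℝ) : ℂ) * (lam j q) ^ (n - i)) :
    (ContDiff ℝ 1 ρ ∧ ∀ q : ℝ × ℝ, pt ρ q + μ q * px ρ q = 0) ∧
    (∀ j ∈ Finset.Icc 1 l,
      ContDiff ℝ 1 (r j) ∧ ∀ q : ℝ × ℝ, pt (r j) q + lam j q * px (r j) q = 0) :=
  statement3_general l n hn u hsmooth hsol μ hμ lam hlamcont hfact ρ hρ r hr
end

section
/- Let n ≥ 2, μ ∈ ℝ, and let V = (v₁,...,vₙ) : ℝ → ℝⁿ be a non-constant C¹ periodic function such that U(t,x) := V(x − μt) is a solution of the dispersionless Lax reduction of the Benney chain; equivalently, setting v₀ := 0, the components satisfy the ODE system μ·vᵢ′ = −(n−i+1)·v_{i−1}·v₁′ + v_{i+1}′ for i = 1,...,n−1 and μ·vₙ′ = −v_{n−1}·v₁′, together with the eigenvalue relation μⁿ + (n−1)v₁μ^{n−2} + (n−2)v₂μ^{n−3} + ⋯ + v_{n−1} = 0. Then μ = 0. -/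
/-!
Write `d := v₁'`. The ODE system gives `vⱼ' = Cⱼ d` with `Cⱼ = μ^{j-1} + ∑_{l ≤ j-2} (n-l) v_l μ^{j-2-l}`,
and the eigenvalue relation says that `P := μⁿ + ∑ (n-i) vᵢ μ^{n-1-i}` vanishes. On the open set
`{d ≠ 0}` the derivative `P' = d · ∑ (n-j) Cⱼ μ^{n-1-j}` vanishes too, so the second factor, an
expression of the same shape two degrees lower and again with positive weights, vanishes there.
Descending to degree `0` or `1` leaves a positive multiple of `1` or of `μ`, which cannot vanish when
`μ ≠ 0`; hence `{d ≠ 0}` is empty, every `vⱼ' = Cⱼ d` is zero and `V` is constant.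
-/

open Finset Topology

/-- The eigenvalue relation reads `eigenSum μ v 1 (n - ·) n = 0`, and `Cⱼ = eigenSum μ v 1 (n - ·) (j - 1)`. -/
noncomputable def eigenSum (μ : ℝ) (v : ℕ → ℝ → ℝ) (a : ℝ) (φ : ℕ → ℝ) (k : ℕ) (s : ℝ) : ℝ :=
  a * μ ^ k + ∑ j ∈ Icc 1 (k - 1), φ j * v j s * μ ^ (k - 1 - j)

section

variable {n : ℕ} {μ : ℝ} {v : ℕ → ℝ → ℝ}

lemma eigenSum_succ (a : ℝ) (φ : ℕ → ℝ) (k : ℕ) {s : ℝ} (hv0 : v 0 s = 0) :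
    eigenSum μ v a φ (k + 1) s = μ * eigenSum μ v a φ k s + φ k * v k s := by
  cases k with
  | zero => simp [eigenSum, hv0, mul_comm]
  | succ k =>
    have hpow : ∀ j ∈ Icc 1 k, φ j * v j s * μ ^ (k + 1 - j) = μ * (φ j * v j s * μ ^ (k - j)) := by
      intro j hj
      rw [mem_Icc] at hj
      rw [show k + 1 - j = k - j + 1 by omega, pow_succ]
      ring
    simp only [eigenSum, Nat.add_sub_cancel]
    rw [sum_Icc_succ_top (by omega), sum_congr rfl hpow, Nat.sub_self, pow_zero, mul_add, mul_sum]
    ring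

lemma deriv_eq_eigenSum_mul_deriv_one (hv0 : ∀ s, v 0 s = 0)
    (hode : ∀ i ∈ Icc 1 (n - 1), ∀ s : ℝ,
        μ * deriv (v i) s = -(((n : ℝ) - i + 1) * v (i - 1) s * deriv (v 1) s)
          + deriv (v (i + 1)) s)
    {j : ℕ} (hj1 : 1 ≤ j) (hjn : j ≤ n) (s : ℝ) :
    deriv (v j) s = eigenSum μ v 1 (fun l => n - l) (j - 1) s * deriv (v 1) s := by
  induction j, hj1 using Nat.le_induction with
  | base => simp [eigenSum]
  | succ j hj ih =>
    have hstep := hode j (mem_Icc.2 ⟨hj, by omega⟩) s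
    obtain ⟨i, rfl⟩ : ∃ i, j = i + 1 := ⟨j - 1, by omega⟩
    rw [Nat.add_sub_cancel] at ih hstep
    rw [ih (by omega)] at hstep
    rw [Nat.add_sub_cancel, eigenSum_succ _ _ _ (hv0 s)]
    push_cast at hstep
    linarith

lemma sum_mul_eigenSum (b : ℝ) (φ ψ : ℕ → ℝ) (k : ℕ) (s : ℝ) :
    ∑ j ∈ Icc 1 (k - 1), φ j * eigenSum μ v b ψ (j - 1) s * μ ^ (k - 1 - j)
      = eigenSum μ v (b * ∑ j ∈ Icc 1 (k - 1), φ j)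
          (fun l => ψ l * ∑ j ∈ Icc (l + 2) (k - 1), φ j) (k - 2) s := by
  have hterm : ∀ j ∈ Icc 1 (k - 1), φ j * eigenSum μ v b ψ (j - 1) s * μ ^ (k - 1 - j)
      = b * φ j * μ ^ (k - 2)
        + ∑ l ∈ Icc 1 (j - 1 - 1), ψ l * φ j * v l s * μ ^ (k - 2 - 1 - l) := by
    intro j hj
    rw [mem_Icc] at hj
    simp only [eigenSum, add_mul, mul_add, sum_mul, mul_sum]
    congr 1
    · rw [show k - 2 = j - 1 + (k - 1 - j) by omega, pow_add]
      ring
    · refine sum_congr rfl fun l hl => ?_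
      rw [mem_Icc] at hl
      rw [show k - 2 - 1 - l = j - 1 - 1 - l + (k - 1 - j) by omega, pow_add]
      ring
  rw [sum_congr rfl hterm, sum_add_distrib, ← sum_mul, ← mul_sum, eigenSum]
  congr 1
  rw [sum_comm' (s' := fun l => Icc (l + 2) (k - 1)) (t' := Icc 1 (k - 2 - 1))
    (fun j l => by simp only [mem_Icc]; omega)]
  refine sum_congr rfl fun l _ => ?_
  rw [mul_sum, sum_mul, sum_mul]

lemma hasDerivAt_eigenSum (a : ℝ) (φ : ℕ → ℝ) {k : ℕ} {s : ℝ}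
    (hdiff : ∀ j ∈ Icc 1 (k - 1), DifferentiableAt ℝ (v j) s) :
    HasDerivAt (eigenSum μ v a φ k)
      (∑ j ∈ Icc 1 (k - 1), φ j * deriv (v j) s * μ ^ (k - 1 - j)) s := by
  have hterm : ∀ j ∈ Icc 1 (k - 1),
      HasDerivAt (fun t => φ j * v j t * μ ^ (k - 1 - j)) (φ j * deriv (v j) s * μ ^ (k - 1 - j)) s :=
    fun j hj => ((hdiff j hj).hasDerivAt.const_mul (φ j)).mul_const _
  exact (HasDerivAt.fun_sum hterm).const_add (a * μ ^ k)

lemma deriv_eigenSum (hv0 : ∀ s, v 0 s = 0)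
    (hsmooth : ∀ i ∈ Icc 1 n, ContDiff ℝ 1 (v i))
    (hode : ∀ i ∈ Icc 1 (n - 1), ∀ s : ℝ,
        μ * deriv (v i) s = -(((n : ℝ) - i + 1) * v (i - 1) s * deriv (v 1) s)
          + deriv (v (i + 1)) s)
    (a : ℝ) (φ : ℕ → ℝ) {k : ℕ} (hk : k ≤ n) (s : ℝ) :
    deriv (eigenSum μ v a φ k) s
      = eigenSum μ v (∑ j ∈ Icc 1 (k - 1), φ j)
          (fun l => (n - l) * ∑ j ∈ Icc (l + 2) (k - 1), φ j) (k - 2) s * deriv (v 1) s := by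
  have hdiff : ∀ j ∈ Icc 1 (k - 1), DifferentiableAt ℝ (v j) s := fun j hj =>
    ((hsmooth j (by simp only [mem_Icc] at hj ⊢; omega)).differentiable one_ne_zero) s
  have hslope : ∀ j ∈ Icc 1 (k - 1), φ j * deriv (v j) s * μ ^ (k - 1 - j)
      = φ j * eigenSum μ v 1 (fun l => n - l) (j - 1) s * μ ^ (k - 1 - j) * deriv (v 1) s := by
    intro j hj
    rw [mem_Icc] at hj
    rw [deriv_eq_eigenSum_mul_deriv_one hv0 hode hj.1 (by omega)]
    ring
  rw [(hasDerivAt_eigenSum a φ hdiff).deriv, sum_congr rfl hslope, ← sum_mul, sum_mul_eigenSum,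
    one_mul]

lemma deriv_one_eq_zero_of_eigenSum_eq_zero (hv0 : ∀ s, v 0 s = 0)
    (hsmooth : ∀ i ∈ Icc 1 n, ContDiff ℝ 1 (v i))
    (hode : ∀ i ∈ Icc 1 (n - 1), ∀ s : ℝ,
        μ * deriv (v i) s = -(((n : ℝ) - i + 1) * v (i - 1) s * deriv (v 1) s)
          + deriv (v (i + 1)) s)
    (hμ : μ ≠ 0) {k : ℕ} (hk : k ≤ n) {a : ℝ} {φ : ℕ → ℝ} (ha : 0 < a)
    (hφ : ∀ j ∈ Icc 1 (k - 1), 0 < φ j)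
    (hzero : ∀ s, deriv (v 1) s ≠ 0 → eigenSum μ v a φ k s = 0) (s : ℝ) :
    deriv (v 1) s = 0 := by
  induction k using Nat.twoStepInduction generalizing a φ with
  | zero =>
    by_contra hs
    exact ha.ne' (by simpa [eigenSum] using hzero s hs)
  | one =>
    by_contra hs
    exact mul_ne_zero ha.ne' hμ (by simpa [eigenSum] using hzero s hs)
  | more k ih _ =>
    rw [show k + 2 - 1 = k + 1 by omega] at hφ
    refine ih (φ := fun l => (n - l) * ∑ j ∈ Icc (l + 2) (k + 1), φ j) (by omega)
      (sum_pos hφ (nonempty_Icc.2 (by omega))) (fun l hl => ?_) fun t ht => ?_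
    · rw [mem_Icc] at hl
      refine mul_pos (sub_pos.2 (by exact_mod_cast (show l < n by omega))) (sum_pos ?_ ?_)
      · exact fun j hj => hφ j (by simp only [mem_Icc] at hj ⊢; omega)
      · exact nonempty_Icc.2 (by omega)
    · have hcont : Continuous (deriv (v 1)) :=
        (hsmooth 1 (mem_Icc.2 ⟨le_rfl, by omega⟩)).continuous_deriv le_rfl
      have hlocal : eigenSum μ v a φ (k + 2) =ᶠ[𝓝 t] fun _ => 0 :=
        (hcont.continuousAt.eventually_ne ht).mono fun u hu => hzero u hu
      have hderiv := hlocal.deriv_eq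
      rw [deriv_const, deriv_eigenSum hv0 hsmooth hode a φ hk] at hderiv
      simpa [Nat.add_sub_cancel, ht] using hderiv

end

theorem statement8_general
    (n : ℕ) (μ : ℝ)
    (v : ℕ → ℝ → ℝ)
    (hv0 : ∀ s : ℝ, v 0 s = 0)
    (hsmooth : ∀ i ∈ Finset.Icc 1 n, ContDiff ℝ 1 (v i))
    (hnonconst : ∃ i ∈ Finset.Icc 1 n, ∃ s s' : ℝ, v i s ≠ v i s')
    (hode : ∀ i ∈ Finset.Icc 1 (n - 1), ∀ s : ℝ,
        μ * deriv (v i) s = -(((n : ℝ) - i + 1) * v (i - 1) s * deriv (v 1) s)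
          + deriv (v (i + 1)) s)
    (heigen : ∀ s : ℝ,
        μ ^ n + ∑ i ∈ Finset.Icc 1 (n - 1), ((n : ℝ) - i) * v i s * μ ^ (n - 1 - i) = 0) :
    μ = 0 := by
  by_contra hμ
  have hweights : ∀ j ∈ Icc 1 (n - 1), (0 : ℝ) < n - j := fun j hj =>
    sub_pos.2 (by exact_mod_cast (show j < n by simp only [mem_Icc] at hj; omega))
  have hd : ∀ s, deriv (v 1) s = 0 :=
    deriv_one_eq_zero_of_eigenSum_eq_zero hv0 hsmooth hode hμ le_rfl one_pos hweights
      fun s _ => by simpa [eigenSum] using heigen s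
  obtain ⟨i, hi, s, s', hne⟩ := hnonconst
  refine hne (is_const_of_deriv_eq_zero ((hsmooth i hi).differentiable one_ne_zero) (fun x => ?_) s s')
  rw [mem_Icc] at hi
  rw [deriv_eq_eigenSum_mul_deriv_one hv0 hode hi.1 hi.2, hd, mul_zero]

/-- Let `V = (v₁, …, vₙ)` (with `v₀ = 0`) be a non-constant `C¹`
periodic profile of a traveling-wave solution `U(t,x) = V(x − μt)` of the
dispersionless Lax reduction of the Benney chain, i.e. the components satisfy
`μ·vᵢ' = −(n−i+1)·v_{i−1}·v₁' + v_{i+1}'` for `i = 1, …, n−1`,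
`μ·vₙ' = −v_{n−1}·v₁'`, together with the eigenvalue relation
`μⁿ + (n−1)v₁μ^{n−2} + (n−2)v₂μ^{n−3} + ⋯ + v_{n−1} = 0`. Then `μ = 0`. -/
theorem statement8
    (n : ℕ) (hn : 2 ≤ n) (μ : ℝ)
    (v : ℕ → ℝ → ℝ)
    (hv0 : ∀ s : ℝ, v 0 s = 0)
    (hsmooth : ∀ i ∈ Finset.Icc 1 n, ContDiff ℝ 1 (v i))
    (T : ℝ) (hT : 0 < T)
    (hper : ∀ i ∈ Finset.Icc 1 n, ∀ s : ℝ, v i (s + T) = v i s)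
    (hnonconst : ∃ i ∈ Finset.Icc 1 n, ∃ s s' : ℝ, v i s ≠ v i s')
    (hode : ∀ i ∈ Finset.Icc 1 (n - 1), ∀ s : ℝ,
        μ * deriv (v i) s = -(((n : ℝ) - i + 1) * v (i - 1) s * deriv (v 1) s)
          + deriv (v (i + 1)) s)
    (hoden : ∀ s : ℝ, μ * deriv (v n) s = -(v (n - 1) s * deriv (v 1) s))
    (heigen : ∀ s : ℝ,
        μ ^ n + ∑ i ∈ Finset.Icc 1 (n - 1), ((n : ℝ) - i) * v i s * μ ^ (n - 1 - i) = 0) :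
    μ = 0 :=
  statement8_general n μ v hv0 hsmooth hnonconst hode heigen
end

section
/- Let w, v : ℝ² → ℝ be C¹ functions of (t,x) solving the system w_t + (wv)_x = 0 and v_t + (w²/2 − 3v²/2)_x = 0. Define f := v + √5·w, g := v − √5·w, u₁ := −(3f² + 4fg + 3g²)/5, and F(p,t,x) := (1/5)(p − f)²(p − g)²(p + 2f + 2g). Then F is a polynomial in p of the form (1/5)p⁵ + u₁p³ + u₂p² + u₃p + u₄ (no p⁴ term, with u₂, u₃, u₄ certain polynomial expressions in f and g), and F satisfies the conservation equation ∂_t F + p·∂_x F − (∂_x u₁)·∂_p F = 0 for all p ∈ ℝ and all (t,x). Consequently (u₁,u₂,u₃,u₄) solves the dispersionless Lax reduction of the Benney chain with n = 4. -/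
/-!
Both `f = v + √5 w` and `g = v - √5 w` obey the Hopf equation forced by `u₁`,
`fₜ + f fₓ + (u₁)ₓ = 0`. Since `F` depends on `(t, x)` only through `f` and `g`, the chain rule
gives `Fₜ + p Fₓ = F_f ((p - f) fₓ - (u₁)ₓ) + F_g ((p - g) gₓ - (u₁)ₓ)`, and that this equals
`(u₁)ₓ F_p` is a polynomial identity in `p, f, g, fₓ, gₓ`. Expanding `F` in powers of `p`, the
conservation equation is a cubic in `p` vanishing identically, whose four coefficients are the
four Benney equations.
-/

theorem coeffs_eq_zero_of_cubic_eq_zero {a b c d : ℝ}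
    (h : ∀ p : ℝ, a * p ^ 3 + b * p ^ 2 + c * p + d = 0) :
    a = 0 ∧ b = 0 ∧ c = 0 ∧ d = 0 := by
  have h0 := h 0
  have h1 := h 1
  have h2 := h (-1)
  have h3 := h 2
  refine ⟨?_, ?_, ?_, ?_⟩ <;> linarith

theorem hasDerivAt_quintic (a b c d p : ℝ) :
    HasDerivAt (fun y => 1 / 5 * y ^ 5 + a * y ^ 3 + b * y ^ 2 + c * y + d)
      (p ^ 4 + 3 * a * p ^ 2 + 2 * b * p + c) p := by
  refine ((((((hasDerivAt_pow 5 p).const_mul (1 / 5)).fun_add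
    ((hasDerivAt_pow 3 p).const_mul a)).fun_add ((hasDerivAt_pow 2 p).const_mul b)).fun_add
    ((hasDerivAt_id p).const_mul c)).add_const d).congr_deriv ?_
  norm_num
  ring

theorem hasDerivAt_double_critical (a b p : ℝ) :
    HasDerivAt (fun y => 1 / 5 * (y - a) ^ 2 * (y - b) ^ 2 * (y + 2 * a + 2 * b))
      ((p - a) * (p - b) * (5 * p ^ 2 + 5 * (a + b) * p - 4 * (a + b) ^ 2 + a * b) / 5) p := by
  convert hasDerivAt_quintic (-(3 * a ^ 2 + 4 * a * b + 3 * b ^ 2) / 5)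
    (2 * (a + b) * ((a + b) ^ 2 + a * b) / 5) (a * b * (a * b - 4 * (a + b) ^ 2) / 5)
    (2 * (a + b) * (a * b) ^ 2 / 5) p using 1
  · funext y; ring
  · ring

theorem forced_hopf_of_system (w v : ℝ × ℝ → ℝ) (hw : Differentiable ℝ w)
    (hv : Differentiable ℝ v)
    (hsys1 : ∀ q : ℝ × ℝ, pt w q + px (fun z => w z * v z) q = 0)
    (hsys2 : ∀ q : ℝ × ℝ, pt v q + px (fun z => (w z) ^ 2 / 2 - 3 * (v z) ^ 2 / 2) q = 0)
    {s : ℝ} (hs : s ^ 2 = 5) (f U : ℝ × ℝ → ℝ) (hf : ∀ q, f q = v q + s * w q)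
    (hU : ∀ q, U q = -2 * v q ^ 2 - 2 * w q ^ 2) (q : ℝ × ℝ) :
    pt f q + f q * px f q + px U q = 0 := by
  obtain rfl : f = fun z => v z + s * w z := funext hf
  obtain rfl : U = fun z => -2 * v z ^ 2 - 2 * w z ^ 2 := funext hU
  have h1 := hsys1 q
  have h2 := hsys2 q
  simp only [pt, px, div_eq_mul_inv] at h1 h2 ⊢
  simp (disch := fun_prop) only [fderiv_fun_mul, fderiv_fun_add, fderiv_fun_sub, fderiv_fun_pow,
    fderiv_fun_const, add_apply, sub_apply, smul_apply, smul_eq_mul, nsmul_eq_mul, Pi.zero_apply,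
    zero_apply] at h1 h2 ⊢
  linear_combination h2 + s * h1 + (w q * fderiv ℝ w q (0, 1)) * hs

theorem conservation_of_forced_hopf (f g U : ℝ × ℝ → ℝ) (hf : Differentiable ℝ f)
    (hg : Differentiable ℝ g)
    (hU : ∀ q, U q = -(3 * f q ^ 2 + 4 * f q * g q + 3 * g q ^ 2) / 5)
    (hfU : ∀ q, pt f q + f q * px f q + px U q = 0)
    (hgU : ∀ q, pt g q + g q * px g q + px U q = 0)
    (F : ℝ → ℝ × ℝ → ℝ)
    (hF : ∀ p q, F p q = 1 / 5 * (p - f q) ^ 2 * (p - g q) ^ 2 * (p + 2 * f q + 2 * g q))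
    (p : ℝ) (q : ℝ × ℝ) :
    pt (F p) q + p * px (F p) q - px U q * deriv (fun p' : ℝ => F p' q) p = 0 := by
  obtain rfl : U = fun z => -(3 * f z ^ 2 + 4 * f z * g z + 3 * g z ^ 2) / 5 := funext hU
  have hFp : F p = fun z => 1 / 5 * (p - f z) ^ 2 * (p - g z) ^ 2 * (p + 2 * f z + 2 * g z) :=
    funext (hF p)
  have hFq : (fun p' => F p' q)
      = fun p' => 1 / 5 * (p' - f q) ^ 2 * (p' - g q) ^ 2 * (p' + 2 * f q + 2 * g q) :=
    funext fun p' => hF p' q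
  have h1 := hfU q
  have h2 := hgU q
  rw [hFp, hFq, (hasDerivAt_double_critical _ _ p).deriv]
  simp only [pt, px, div_eq_mul_inv] at h1 h2 ⊢
  simp (disch := fun_prop) only [fderiv_fun_mul, fderiv_fun_add, fderiv_fun_sub, fderiv_fun_pow,
    fderiv_fun_neg, fderiv_fun_const, add_apply, sub_apply, neg_apply, smul_apply, smul_eq_mul,
    nsmul_eq_mul, Pi.zero_apply, zero_apply] at h1 h2 ⊢
  -- the coefficients are `∂F/∂f` and `∂F/∂g`
  linear_combination -2 / 5 * (p - f q) * (p - g q) ^ 2 * (3 * f q + 2 * g q) * h1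
    - 2 / 5 * (p - f q) ^ 2 * (p - g q) * (2 * f q + 3 * g q) * h2

theorem benney_of_conservation (u1 u2 u3 u4 : ℝ × ℝ → ℝ) (h1 : Differentiable ℝ u1)
    (h2 : Differentiable ℝ u2) (h3 : Differentiable ℝ u3) (h4 : Differentiable ℝ u4)
    (F : ℝ → ℝ × ℝ → ℝ)
    (hF : ∀ p q, F p q = 1 / 5 * p ^ 5 + u1 q * p ^ 3 + u2 q * p ^ 2 + u3 q * p + u4 q)
    (hcons : ∀ p q,
      pt (F p) q + p * px (F p) q - px u1 q * deriv (fun p' : ℝ => F p' q) p = 0) :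
    (∀ q, pt u1 q + px u2 q = 0) ∧ (∀ q, pt u2 q + px u3 q = 3 * u1 q * px u1 q) ∧
      (∀ q, pt u3 q + px u4 q = 2 * u2 q * px u1 q) ∧ (∀ q, pt u4 q = u3 q * px u1 q) := by
  have hcubic : ∀ q p, (pt u1 q + px u2 q) * p ^ 3
      + (pt u2 q + px u3 q - 3 * u1 q * px u1 q) * p ^ 2
      + (pt u3 q + px u4 q - 2 * u2 q * px u1 q) * p + (pt u4 q - u3 q * px u1 q) = 0 := by
    intro q p
    have hFp : F p = fun z => 1 / 5 * p ^ 5 + u1 z * p ^ 3 + u2 z * p ^ 2 + u3 z * p + u4 z :=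
      funext (hF p)
    have hFq : (fun p' => F p' q)
        = fun p' => 1 / 5 * p' ^ 5 + u1 q * p' ^ 3 + u2 q * p' ^ 2 + u3 q * p' + u4 q :=
      funext fun p' => hF p' q
    have h := hcons p q
    rw [hFp, hFq, (hasDerivAt_quintic _ _ _ _ p).deriv] at h
    simp only [pt, px] at h ⊢
    simp (disch := fun_prop) only [fderiv_fun_add, fderiv_mul_const, fderiv_fun_const, add_apply,
      smul_apply, smul_eq_mul, Pi.zero_apply, zero_apply] at h
    linear_combination h
  refine ⟨fun q => ?_, fun q => ?_, fun q => ?_, fun q => ?_⟩ <;>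
  obtain ⟨e1, e2, e3, e4⟩ := coeffs_eq_zero_of_cubic_eq_zero (hcubic q)
  · linear_combination e1
  · linear_combination e2
  · linear_combination e3
  · linear_combination e4

/-- If `(w,v)` solves `wₜ + (wv)ₓ = 0`,
`vₜ + (w²/2 − 3v²/2)ₓ = 0`, then with `f = v + √5·w`, `g = v − √5·w`,
`u₁ = −(3f² + 4fg + 3g²)/5` and `F(p) = (1/5)(p−f)²(p−g)²(p+2f+2g)`, the
function `F` has the form `(1/5)p⁵ + u₁p³ + u₂p² + u₃p + u₄`, satisfies the
conservation equation `Fₜ + pFₓ − (u₁)ₓFₚ = 0`, and `(u₁,u₂,u₃,u₄)` solves the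
`n = 4` dispersionless Lax reduction of the Benney chain. -/
theorem statement10
    (w v : ℝ × ℝ → ℝ) (hw : ContDiff ℝ 1 w) (hv : ContDiff ℝ 1 v)
    (hsys1 : ∀ q : ℝ × ℝ, pt w q + px (fun z => w z * v z) q = 0)
    (hsys2 : ∀ q : ℝ × ℝ, pt v q + px (fun z => (w z) ^ 2 / 2 - 3 * (v z) ^ 2 / 2) q = 0)
    (f g u1 : ℝ × ℝ → ℝ) (F : ℝ → ℝ × ℝ → ℝ)
    (hf : ∀ q : ℝ × ℝ, f q = v q + Real.sqrt 5 * w q)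
    (hg : ∀ q : ℝ × ℝ, g q = v q - Real.sqrt 5 * w q)
    (hu1 : ∀ q : ℝ × ℝ, u1 q = -(3 * (f q) ^ 2 + 4 * f q * g q + 3 * (g q) ^ 2) / 5)
    (hFdef : ∀ (p : ℝ) (q : ℝ × ℝ),
        F p q = (1 / 5) * (p - f q) ^ 2 * (p - g q) ^ 2 * (p + 2 * f q + 2 * g q)) :
    ∃ u2 u3 u4 : ℝ × ℝ → ℝ,
      (∀ (p : ℝ) (q : ℝ × ℝ),
          F p q = (1 / 5) * p ^ 5 + u1 q * p ^ 3 + u2 q * p ^ 2 + u3 q * p + u4 q) ∧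
      (∀ (p : ℝ) (q : ℝ × ℝ),
          pt (F p) q + p * px (F p) q - px u1 q * deriv (fun p' : ℝ => F p' q) p = 0) ∧
      (∀ q : ℝ × ℝ, pt u1 q + px u2 q = 0) ∧
      (∀ q : ℝ × ℝ, pt u2 q + px u3 q = 3 * u1 q * px u1 q) ∧
      (∀ q : ℝ × ℝ, pt u3 q + px u4 q = 2 * u2 q * px u1 q) ∧
      (∀ q : ℝ × ℝ, pt u4 q = u3 q * px u1 q) := by
  have hwD : Differentiable ℝ w := hw.differentiable one_ne_zero
  have hvD : Differentiable ℝ v := hv.differentiable one_ne_zero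
  have hs5 : Real.sqrt 5 ^ 2 = 5 := Real.sq_sqrt (by norm_num)
  have hu1vw : ∀ q, u1 q = -2 * v q ^ 2 - 2 * w q ^ 2 := by
    intro q
    rw [hu1, hf, hg]
    linear_combination (-2 / 5 * w q ^ 2) * hs5
  have hfU := forced_hopf_of_system w v hwD hvD hsys1 hsys2 hs5 f u1 hf hu1vw
  have hgU := forced_hopf_of_system w v hwD hvD hsys1 hsys2 (by rw [neg_sq, hs5]) g u1
    (fun q => by rw [hg]; ring) hu1vw
  have hfD : Differentiable ℝ f := by rw [funext hf]; fun_prop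
  have hgD : Differentiable ℝ g := by rw [funext hg]; fun_prop
  have hcons := conservation_of_forced_hopf f g u1 hfD hgD hu1 hfU hgU F hFdef
  have hexp : ∀ p q, F p q = 1 / 5 * p ^ 5 + u1 q * p ^ 3
      + 2 * (f q + g q) * ((f q + g q) ^ 2 + f q * g q) / 5 * p ^ 2
      + f q * g q * (f q * g q - 4 * (f q + g q) ^ 2) / 5 * p
      + 2 * (f q + g q) * (f q * g q) ^ 2 / 5 := by
    intro p q
    rw [hFdef, hu1]
    ring
  exact ⟨_, _, _, hexp, hcons, benney_of_conservation u1 _ _ _ (by rw [funext hu1]; fun_prop)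
    (by fun_prop) (by fun_prop) (by fun_prop) F hexp hcons⟩
end

section
/- Let f, g : ℝ² → ℝ be C¹ functions of (t,x), set u := −(3f² + 4fg + 3g²)/5, h := (f − g)/2, and q := (f + g)/2. Then the pair of equations f_t + f·f_x + u_x = 0 and g_t + g·g_x + u_x = 0 holds on ℝ² if and only if the pair of equations h_t + (hq)_x = 0 and q_t + (h²/10 − 3q²/2)_x = 0 holds on ℝ². -/
section DirectionalDerivative

variable {E : Type*} [NormedAddCommGroup E] [NormedSpace ℝ E] {f g F : E → ℝ} {z : E}

theorem fderiv_apply_eq_of_linear (hf : DifferentiableAt ℝ f z) (hg : DifferentiableAt ℝ g z)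
    (a b : ℝ) (hF : ∀ y, F y = a * f y + b * g y) (v : E) :
    fderiv ℝ F z v = a * fderiv ℝ f z v + b * fderiv ℝ g z v := by
  obtain rfl : F = _ := funext hF
  have hF' : HasFDerivAt (fun y => a * f y + b * g y) _ z :=
    (hf.hasFDerivAt.const_mul a).add (hg.hasFDerivAt.const_mul b)
  rw [hF'.fderiv]
  simp

theorem fderiv_apply_eq_of_quadratic (hf : DifferentiableAt ℝ f z)
    (hg : DifferentiableAt ℝ g z) (a b c : ℝ)
    (hF : ∀ y, F y = a * f y ^ 2 + b * (f y * g y) + c * g y ^ 2) (v : E) :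
    fderiv ℝ F z v = 2 * a * f z * fderiv ℝ f z v
      + b * (g z * fderiv ℝ f z v + f z * fderiv ℝ g z v) + 2 * c * g z * fderiv ℝ g z v := by
  obtain rfl : F = _ := funext hF
  have hF' : HasFDerivAt (fun y => a * f y ^ 2 + b * (f y * g y) + c * g y ^ 2) _ z :=
    (((hf.hasFDerivAt.pow 2).const_mul a).add
      ((hf.hasFDerivAt.mul hg.hasFDerivAt).const_mul b)).add ((hg.hasFDerivAt.pow 2).const_mul c)
  rw [hF'.fderiv]
  simp only [Nat.add_one_sub_one, pow_one, nsmul_eq_mul, Nat.cast_ofNat, smul_add,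
    add_apply, smul_apply, smul_eq_mul]
  ring

end DirectionalDerivative

theorem forall_eq_zero_and_iff_half_sub_half_add {α : Type*} (A B : α → ℝ) :
    ((∀ z, A z = 0) ∧ ∀ z, B z = 0) ↔
      ((∀ z, (A z - B z) / 2 = 0) ∧ ∀ z, (A z + B z) / 2 = 0) := by
  simp only [← forall_and]
  refine forall_congr' fun z => ⟨fun ⟨hA, hB⟩ => ?_, fun ⟨hd, hs⟩ => ?_⟩
  · simp [hA, hB]
  · constructor <;> linarith

/-- With `u = −(3f² + 4fg + 3g²)/5`, `h = (f−g)/2` and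
`q = (f+g)/2`, the pair of equations `fₜ + f·fₓ + uₓ = 0`, `gₜ + g·gₓ + uₓ = 0`
holds on `ℝ²` if and only if the pair `hₜ + (hq)ₓ = 0`,
`qₜ + (h²/10 − 3q²/2)ₓ = 0` holds on `ℝ²`. -/
theorem statement11
    (f g : ℝ × ℝ → ℝ) (hf : ContDiff ℝ 1 f) (hg : ContDiff ℝ 1 g)
    (u h q : ℝ × ℝ → ℝ)
    (hu : ∀ z : ℝ × ℝ, u z = -(3 * (f z) ^ 2 + 4 * f z * g z + 3 * (g z) ^ 2) / 5)
    (hh : ∀ z : ℝ × ℝ, h z = (f z - g z) / 2)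
    (hq : ∀ z : ℝ × ℝ, q z = (f z + g z) / 2) :
    ((∀ z : ℝ × ℝ, pt f z + f z * px f z + px u z = 0) ∧
     (∀ z : ℝ × ℝ, pt g z + g z * px g z + px u z = 0))
    ↔
    ((∀ z : ℝ × ℝ, pt h z + px (fun y => h y * q y) z = 0) ∧
     (∀ z : ℝ × ℝ, pt q z + px (fun y => (h y) ^ 2 / 10 - 3 * (q y) ^ 2 / 2) z = 0)) := by
  have df z : DifferentiableAt ℝ f z := hf.differentiable one_ne_zero z
  have dg z : DifferentiableAt ℝ g z := hg.differentiable one_ne_zero z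
  have h_eqn z : pt h z + px (fun y => h y * q y) z =
      ((pt f z + f z * px f z + px u z) - (pt g z + g z * px g z + px u z)) / 2 := by
    have dh := fderiv_apply_eq_of_linear (F := h) (df z) (dg z) (1 / 2) (-1 / 2)
      (fun y => by rw [hh]; ring)
    have dhq := fderiv_apply_eq_of_quadratic (F := fun y => h y * q y) (df z) (dg z)
      (1 / 4) 0 (-1 / 4) (fun y => by rw [hh, hq]; ring)
    simp only [pt, px, dh, dhq]
    ring
  have q_eqn z : pt q z + px (fun y => (h y) ^ 2 / 10 - 3 * (q y) ^ 2 / 2) z =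
      ((pt f z + f z * px f z + px u z) + (pt g z + g z * px g z + px u z)) / 2 := by
    have dq := fderiv_apply_eq_of_linear (F := q) (df z) (dg z) (1 / 2) (1 / 2)
      (fun y => by rw [hq]; ring)
    have dflux := fderiv_apply_eq_of_quadratic
      (F := fun y => (h y) ^ 2 / 10 - 3 * (q y) ^ 2 / 2) (df z) (dg z)
      (-7 / 20) (-4 / 5) (-7 / 20) (fun y => by rw [hh, hq]; ring)
    have du := fderiv_apply_eq_of_quadratic (F := u) (df z) (dg z)
      (-3 / 5) (-4 / 5) (-3 / 5) (fun y => by rw [hu]; ring)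
    simp only [pt, px, dq, dflux, du]
    ring
  simp only [h_eqn, q_eqn]
  exact forall_eq_zero_and_iff_half_sub_half_add _ _
end

section
/- For (w,v) ∈ ℝ² with w ≠ 0, set R := √(4v² + w²), λ₁(w,v) := −v + R, and ξ₁ := (w, R − 2v). Then: (a) ξ₁ is an eigenvector of the matrix A(w,v) = [[v, w], [w, −3v]] with eigenvalue λ₁; (b) the directional derivative of the function λ₁ at the point (w,v) in the direction ξ₁ equals 6v(R − 2v)/R; and (c) this directional derivative is positive when v > 0, zero when v = 0, and negative when v < 0. In particular the eigenvalue λ₁ of the strictly hyperbolic system w_t + (wv)_x = 0, v_t + (w²/2 − 3v²/2)_x = 0 is not genuinely nonlinear: the sign of its nonlinearity ∂λ₁/∂r₁ = dλ₁(ξ₁) changes with the sign of v. -/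
/-!
Part (a) only uses `R² = 4v² + w²`. For (b), the chain rule gives
`dλ₁(a, b) = -b + (4vb + wa)/R`; along `ξ₁` one rewrites `w² = (R - 2v)(R + 2v)`
to factor out `R - 2v`. For (c), `w ≠ 0` gives `R > |2v|`, so both `R` and
`R - 2v` are positive and the sign is that of `v`.
-/

theorem mulVec_eigenvector_of_sq_eq {α : Type*} [CommRing α] {w v R : α}
    (hR : R ^ 2 = 4 * v ^ 2 + w ^ 2) :
    Matrix.mulVec !![v, w; w, -3 * v] ![w, R - 2 * v] = (-v + R) • ![w, R - 2 * v] := by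
  ext i
  fin_cases i <;>
    simp only [Fin.zero_eta, Fin.mk_one, Matrix.mulVec_cons, Matrix.mulVec_empty, Pi.add_apply,
      Pi.smul_apply, Function.comp_apply, Matrix.cons_val_zero, Matrix.cons_val_one,
      Matrix.cons_val_fin_one, Matrix.head_cons, Matrix.tail_cons, smul_eq_mul, add_zero]
  · ring
  · linear_combination -hR

theorem two_mul_lt_sqrt_four_mul_sq_add_sq {w v : ℝ} (hw : w ≠ 0) :
    2 * v < √(4 * v ^ 2 + w ^ 2) :=
  calc 2 * v ≤ |2 * v| := le_abs_self _
    _ = √(4 * v ^ 2) := by rw [← Real.sqrt_sq_eq_abs]; ring_nf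
    _ < √(4 * v ^ 2 + w ^ 2) :=
      Real.sqrt_lt_sqrt (by positivity) (lt_add_of_pos_right _ (by positivity))

theorem fderiv_neg_snd_add_sqrt_apply {w v : ℝ} (h : 4 * v ^ 2 + w ^ 2 ≠ 0) (a b : ℝ) :
    fderiv ℝ (fun p : ℝ × ℝ => -p.2 + √(4 * p.2 ^ 2 + p.1 ^ 2)) (w, v) (a, b)
      = -b + (4 * v * b + w * a) / √(4 * v ^ 2 + w ^ 2) := by
  have hfst : HasFDerivAt (𝕜 := ℝ) Prod.fst (ContinuousLinearMap.fst ℝ ℝ ℝ) (w, v) := hasFDerivAt_fst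
  have hsnd : HasFDerivAt (𝕜 := ℝ) Prod.snd (ContinuousLinearMap.snd ℝ ℝ ℝ) (w, v) := hasFDerivAt_snd
  have hquad := ((hsnd.pow 2).const_mul (4 : ℝ)).add (hfst.pow 2)
  have hlam : HasFDerivAt (fun p : ℝ × ℝ => -p.2 + √(4 * p.2 ^ 2 + p.1 ^ 2)) _ (w, v) :=
    hsnd.neg.add (hquad.sqrt h)
  rw [hlam.fderiv]
  simp only [Pi.add_apply, Nat.add_one_sub_one, pow_one, nsmul_eq_mul, Nat.cast_ofNat,
    add_apply, neg_apply, smul_apply, ContinuousLinearMap.coe_snd', ContinuousLinearMap.coe_fst', smul_eq_mul]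
  field_simp

/-- For `w ≠ 0`, with `R = √(4v² + w²)`, `λ₁ = −v + R` and
`ξ₁ = (w, R − 2v)`: (a) `ξ₁` is an eigenvector of `A(w,v) = [[v, w], [w, −3v]]`
with eigenvalue `λ₁`; (b) the directional derivative of
`(w,v) ↦ −v + √(4v² + w²)` at `(w,v)` in the direction `ξ₁` equals
`6v(R − 2v)/R`; (c) this quantity is positive for `v > 0`, zero for `v = 0`, and
negative for `v < 0` — so the eigenvalue `λ₁` is not genuinely nonlinear: the
sign of its nonlinearity changes with the sign of `v`. -/
theorem statement13
    (w v : ℝ) (hw : w ≠ 0)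
    (R lam1 : ℝ) (xi : Fin 2 → ℝ)
    (hR : R = Real.sqrt (4 * v ^ 2 + w ^ 2))
    (hlam1 : lam1 = -v + R)
    (hxi : xi = ![w, R - 2 * v]) :
    Matrix.mulVec !![v, w; w, -3 * v] xi = lam1 • xi ∧
    fderiv ℝ (fun p : ℝ × ℝ => -p.2 + Real.sqrt (4 * p.2 ^ 2 + p.1 ^ 2)) (w, v)
      (w, R - 2 * v) = 6 * v * (R - 2 * v) / R ∧
    (0 < v → 0 < 6 * v * (R - 2 * v) / R) ∧
    (v = 0 → 6 * v * (R - 2 * v) / R = 0) ∧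
    (v < 0 → 6 * v * (R - 2 * v) / R < 0) := by
  have hpos : 0 < 4 * v ^ 2 + w ^ 2 := by positivity
  have hR0 : 0 < R := hR ▸ Real.sqrt_pos.mpr hpos
  have hR2 : R ^ 2 = 4 * v ^ 2 + w ^ 2 := hR ▸ Real.sq_sqrt hpos.le
  have hRv : 0 < R - 2 * v := sub_pos.mpr (hR ▸ two_mul_lt_sqrt_four_mul_sq_add_sq hw)
  subst hlam1 hxi
  refine ⟨mulVec_eigenvector_of_sq_eq hR2, ?_, fun hv => ?_, fun hv => by simp [hv], fun hv => ?_⟩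
  · rw [fderiv_neg_snd_add_sqrt_apply hpos.ne', ← hR]
    field_simp
    linear_combination -hR2
  · exact div_pos (mul_pos (by positivity) hRv) hR0
  · exact div_neg_of_neg_of_pos (mul_neg_of_neg_of_pos (by linarith) hRv) hR0
end
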